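/- arXiv:1309.3343 — 2 statements merged into one kernel-verified Lean document; each statement's English description precedes it below -/
import Mathlib

section
/- For f in the Schwartz space on ℝⁿ and h in the Schwartz space on ℝ, the Fourier transform of the windowed ray transform P_h f(u,v) = ∫_ℝ f(u+tv) h(t) dt with respect to the first variable u satisfies (P_h f)^(ξ, v) = f̂(ξ) · ĥ(−ξ·v), where f̂ is the n-dimensional Fourier transform of f and ĥ the 1-dimensional Fourier transform of h. -/
open MeasureTheory Real Complex SchwartzMap
open scoped RealInnerProductSpace

/-- The windowed ray transform `P_h f (u, v) = ∫ f(u + t v) h(t) dt`. -/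
noncomputable def windowedRay {n : ℕ} (h : ℝ → ℂ) (f : EuclideanSpace ℝ (Fin n) → ℂ)
    (u v : EuclideanSpace ℝ (Fin n)) : ℂ :=
  ∫ t : ℝ, f (u + t • v) * h t

/-- One-dimensional Fourier transform with convention `ĝ(ξ) = ∫ g(t) e^{-i t ξ} dt`. -/
noncomputable def ft1 (g : ℝ → ℂ) (ξ : ℝ) : ℂ :=
  ∫ t : ℝ, g t * Complex.exp (-(Complex.I * t * ξ))

/-- n-dimensional Fourier transform with convention `ĝ(ξ) = ∫ g(x) e^{-i x·ξ} dx`. -/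
noncomputable def ftn {n : ℕ} (g : EuclideanSpace ℝ (Fin n) → ℂ)
    (ξ : EuclideanSpace ℝ (Fin n)) : ℂ :=
  ∫ x : EuclideanSpace ℝ (Fin n), g x * Complex.exp (-(Complex.I * (⟪x, ξ⟫ : ℝ)))

/-! Integrating first in `u`, the shift `u ↦ u + t v` multiplies `f̂(ξ)` by the phase
`e^{i t ξ·v}`, and integrating that phase against `h` in `t` gives `ĥ(-ξ·v)`. Fubini applies
because the shear `(t, u) ↦ (t, u + t v)` preserves Lebesgue measure, so the integrand
`f(u + t v) h(t)` is as integrable as `h ⊗ f`. -/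

section Shear

variable {E : Type*} [NormedAddCommGroup E] [NormedSpace ℝ E] [MeasurableSpace E] [BorelSpace E]
  [SecondCountableTopology E] (μ : Measure E) [μ.IsAddRightInvariant] [SFinite μ]
  (ν : Measure ℝ) [SFinite ν] (v : E)

theorem measurePreserving_shear :
    MeasurePreserving (fun p : ℝ × E => (p.1, p.2 + p.1 • v)) (ν.prod μ) (ν.prod μ) :=
  (MeasurePreserving.id ν).skew_product (by fun_prop)
    (ae_of_all _ fun t => (measurePreserving_add_right μ (t • v)).map_eq)

theorem integrable_comp_shear_mul {𝕜 : Type*} [NormedCommRing 𝕜] {f : E → 𝕜} {h : ℝ → 𝕜}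
    (hf : Integrable f μ) (hh : Integrable h ν) :
    Integrable (fun p : ℝ × E => f (p.2 + p.1 • v) * h p.1) (ν.prod μ) := by
  have hprod : Integrable (fun p : ℝ × E => f p.2 * h p.1) (ν.prod μ) :=
    (hh.mul_prod hf).congr (ae_of_all _ fun _ => mul_comm _ _)
  exact ((measurePreserving_shear μ ν v).integrable_comp hprod.aestronglyMeasurable).2 hprod

end Shear

theorem ftn_comp_add_right {n : ℕ} (g : EuclideanSpace ℝ (Fin n) → ℂ)
    (w ξ : EuclideanSpace ℝ (Fin n)) :
    ftn (fun u => g (u + w)) ξ = Complex.exp (I * ⟪w, ξ⟫) * ftn g ξ := by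
  rw [ftn, ftn, ← integral_const_mul]
  conv_rhs => rw [← integral_add_right_eq_self _ w]
  congr 1 with u
  rw [mul_left_comm, ← Complex.exp_add, inner_add_left]
  push_cast
  ring_nf

theorem ftn_windowedRay {n : ℕ} {f : EuclideanSpace ℝ (Fin n) → ℂ} {h : ℝ → ℂ}
    (hf : Integrable f) (hh : Integrable h) (v ξ : EuclideanSpace ℝ (Fin n)) :
    ftn (fun u => windowedRay h f u v) ξ = ∫ t, h t * ftn (fun u => f (u + t • v)) ξ := by
  have hint : Integrable (Function.uncurry fun t u =>
      f (u + t • v) * h t * Complex.exp (-(I * ⟪u, ξ⟫))) (volume.prod volume) :=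
    (integrable_comp_shear_mul volume volume v hf hh).mul_bdd
      (by fun_prop : Continuous fun p : ℝ × EuclideanSpace ℝ (Fin n) =>
        Complex.exp (-(I * ⟪p.2, ξ⟫))).aestronglyMeasurable
      (ae_of_all _ fun p => (by simp [Complex.norm_exp] : _ ≤ (1 : ℝ)))
  simp only [ftn, windowedRay, ← integral_mul_const, ← integral_integral_swap hint,
    ← integral_const_mul]
  congr 1 with t
  congr 1 with u
  ring

theorem stmt0 {n : ℕ} (f : SchwartzMap (EuclideanSpace ℝ (Fin n)) ℂ) (h : SchwartzMap ℝ ℂ)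
    (ξ v : EuclideanSpace ℝ (Fin n)) :
    ftn (fun u => windowedRay h f u v) ξ = ftn f ξ * ft1 h (-⟪ξ, v⟫) := by
  rw [ftn_windowedRay f.integrable h.integrable, ft1, ← integral_const_mul]
  congr 1 with t
  rw [ftn_comp_add_right, real_inner_smul_left, real_inner_comm]
  push_cast
  ring_nf
end

section
/- Let f ∈ 𝒮(ℝⁿ), h ∈ 𝒮(ℝ), θ ∈ S^{n−1}, r > 0, σ ∈ ℝ. Then r · ∫_{θ^⊥} ∫_ℝ P_h f(u + τ rθ, rθ) e^{−iστ} dτ du = f̂(σ/r · θ) · ĥ(−σ), where the outer integral is over the hyperplane θ^⊥ with its (n−1)-dimensional Lebesgue measure and f̂ is the n-dimensional Fourier transform of f. -/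
/-!
Writing `g(t) = f(u + t r θ)`, the shift relation turns `τ ↦ P_h f(u + τ rθ, rθ)` into the
correlation `τ ↦ ∫ g(t) h(t - τ) dt`, whose Fourier transform at `σ` is `ĝ(σ) ĥ(-σ)` by Fubini.
Rescaling gives `ĝ(σ) = r⁻¹ · (s ↦ f(u + sθ))^(σ/r)`, and integrating over `u ∈ θ^⊥` yields
`f̂((σ/r) θ)` (central slice theorem), because `(u, s) ↦ u + sθ` is a measure-preserving
isomorphism `θ^⊥ × ℝ ≃ ℝⁿ`.
-/

open MeasureTheory Real Complex SchwartzMap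
open scoped RealInnerProductSpace

theorem MeasureTheory.Integrable.mul_cexp_of_re_eq_zero {α : Type*} [MeasurableSpace α]
    {μ : Measure α} {f : α → ℂ} (hf : Integrable f μ) {ψ : α → ℂ} (hψ : AEStronglyMeasurable ψ μ)
    (hre : ∀ x, (ψ x).re = 0) : Integrable (fun x => f x * Complex.exp (ψ x)) μ :=
  hf.mul_bdd (Complex.continuous_exp.comp_aestronglyMeasurable hψ)
    (ae_of_all _ fun x => by rw [Complex.norm_exp, hre, Real.exp_zero])

theorem SchwartzMap.integrable_comp_add_smul {E F : Type*} [NormedAddCommGroup E]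
    [NormedSpace ℝ E] [NormedAddCommGroup F] [NormedSpace ℝ F] (f : 𝓢(E, F)) (u : E) {v : E}
    (hv : v ≠ 0) : Integrable (fun t : ℝ => f (u + t • v)) := by
  have hanti : AntilipschitzWith ‖v‖₊⁻¹ (fun t : ℝ => u + t • v) :=
    AntilipschitzWith.of_le_mul_dist fun x y => by
      rw [dist_add_left, dist_eq_norm, dist_eq_norm, ← sub_smul, norm_smul, NNReal.coe_inv,
        coe_nnnorm, mul_comm ‖x - y‖, inv_mul_cancel_left₀ (norm_ne_zero_iff.mpr hv)]
  exact (SchwartzMap.compCLMOfAntilipschitz ℝ (by fun_prop) hanti f).integrable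

theorem windowedRay_add_smul {n : ℕ} (h : ℝ → ℂ) (f : EuclideanSpace ℝ (Fin n) → ℂ)
    (u v : EuclideanSpace ℝ (Fin n)) (τ : ℝ) :
    windowedRay h f (u + τ • v) v = ∫ t, f (u + t • v) * h (t - τ) := by
  rw [← integral_add_right_eq_self _ τ]
  simp only [windowedRay, add_sub_cancel_right, add_smul, add_assoc, add_comm (τ • v)]

theorem ft1_comp_mul_left (g : ℝ → ℂ) {r : ℝ} (hr : r ≠ 0) (σ : ℝ) :
    ft1 (fun t => g (r * t)) σ = |r|⁻¹ • ft1 g (σ / r) := by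
  rw [ft1, ft1, ← abs_inv, ← Measure.integral_comp_mul_left]
  have hr' : (r : ℂ) ≠ 0 := ofReal_ne_zero.mpr hr
  congr! 4 with t
  push_cast
  field_simp

theorem ft1_correlation {g h : ℝ → ℂ} (hg : Integrable g) (hh : Integrable h) (σ : ℝ) :
    ft1 (fun τ => ∫ t, g t * h (t - τ)) σ = ft1 g σ * ft1 h (-σ) := by
  have hint : Integrable (fun p : ℝ × ℝ => g p.2 * h (p.2 - p.1) * Complex.exp (-(I * p.1 * σ)))
      (volume.prod volume) := by
    refine (?_ : Integrable _ _).mul_cexp_of_re_eq_zero (by fun_prop) fun p => by simp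
    simpa [neg_sub] using
      Integrable.convolution_integrand (ContinuousLinearMap.mul ℝ ℂ) hg hh.comp_neg
  have hshift : ∀ t, ∫ τ, h (t - τ) * Complex.exp (-(I * τ * σ)) =
      Complex.exp (-(I * t * σ)) * ft1 h (-σ) := by
    intro t
    rw [← integral_sub_left_eq_self _ volume t, ft1, ← integral_const_mul]
    congr! 2 with s
    rw [sub_sub_cancel, mul_left_comm, ← Complex.exp_add]
    push_cast
    ring_nf
  calc ft1 (fun τ => ∫ t, g t * h (t - τ)) σ
      = ∫ τ, ∫ t, g t * h (t - τ) * Complex.exp (-(I * τ * σ)) := by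
        simp only [ft1, integral_mul_const]
    _ = ∫ t, ∫ τ, g t * h (t - τ) * Complex.exp (-(I * τ * σ)) := integral_integral_swap hint
    _ = ∫ t, g t * Complex.exp (-(I * t * σ)) * ft1 h (-σ) := by
        congr! 2 with t
        rw [mul_assoc, ← hshift, ← integral_const_mul]
        simp only [mul_assoc]
    _ = ft1 g σ * ft1 h (-σ) := integral_mul_const _ _

theorem integral_eq_integral_orthogonal_integral_add_smul {E F : Type*} [NormedAddCommGroup E]
    [InnerProductSpace ℝ E] [FiniteDimensional ℝ E] [MeasurableSpace E] [BorelSpace E]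
    [NormedAddCommGroup F] [NormedSpace ℝ F] {θ : E} (hθ : ‖θ‖ = 1) {g : E → F}
    (hg : Integrable g) :
    ∫ x, g x = ∫ u : (ℝ ∙ θ)ᗮ, ∫ s : ℝ, g (u + s • θ) := by
  let ι := LinearIsometryEquiv.toSpanUnitSingleton (𝕜 := ℝ) θ hθ
  let e : (ℝ ∙ θ)ᗮ × ℝ ≃ᵐ E :=
    MeasurableEquiv.prodComm.trans <|
      (ι.toMeasurableEquiv.prodCongr (MeasurableEquiv.refl _)).trans <|
      (MeasurableEquiv.toLp 2 _).trans (ℝ ∙ θ).orthogonalDecomposition.symm.toMeasurableEquiv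
  have he : MeasurePreserving e := by
    have hι : MeasurePreserving (Prod.map ι (id : (ℝ ∙ θ)ᗮ → (ℝ ∙ θ)ᗮ))
        (volume.prod volume) (volume.prod volume) :=
      ι.measurePreserving.prod (MeasurePreserving.id _)
    exact Measure.measurePreserving_swap.trans <| hι.trans <|
      (WithLp.volume_preserving_toLp _ _).trans (LinearIsometryEquiv.measurePreserving _)
  have he_apply : ∀ p, e p = (p.1 : E) + p.2 • θ := fun _ => add_comm _ _
  rw [← he.integral_comp', Measure.volume_eq_prod,
    integral_prod (fun p => g (e p)) ((he.integrable_comp_emb e.measurableEmbedding).mpr hg)]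
  simp only [he_apply]

theorem ftn_smul_eq_integral_orthogonal_ft1 {n : ℕ} {f : EuclideanSpace ℝ (Fin n) → ℂ}
    (hf : Integrable f) {θ : EuclideanSpace ℝ (Fin n)} (hθ : ‖θ‖ = 1) (ρ : ℝ) :
    ftn f (ρ • θ) = ∫ u : (ℝ ∙ θ)ᗮ, ft1 (fun s => f (u + s • θ)) ρ := by
  rw [ftn, integral_eq_integral_orthogonal_integral_add_smul hθ
    (hf.mul_cexp_of_re_eq_zero (by fun_prop) fun x => by simp)]
  congr! 2 with u
  rw [ft1]
  congr! 5 with s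
  have hu : ⟪(u : EuclideanSpace ℝ (Fin n)), θ⟫ = 0 :=
    Submodule.inner_left_of_mem_orthogonal (Submodule.mem_span_singleton_self θ) u.2
  rw [inner_smul_right, inner_add_left, real_inner_smul_left, hu, real_inner_self_eq_norm_sq, hθ]
  push_cast
  ring

theorem stmt17 {n : ℕ} (f : SchwartzMap (EuclideanSpace ℝ (Fin n)) ℂ) (h : SchwartzMap ℝ ℂ)
    (θ : EuclideanSpace ℝ (Fin n)) (hθ : ‖θ‖ = 1) (r σ : ℝ) (hr : 0 < r) :
    (r : ℂ) * ∫ u : (ℝ ∙ θ)ᗮ, ∫ τ : ℝ,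
        windowedRay h f ((u : EuclideanSpace ℝ (Fin n)) + τ • (r • θ)) (r • θ) *
          Complex.exp (-(Complex.I * σ * τ))
      = ftn f ((σ / r) • θ) * ft1 h (-σ) := by
  have hrθ : r • θ ≠ 0 := smul_ne_zero hr.ne' (norm_ne_zero_iff.mp (by simp [hθ]))
  have hline : ∀ u : (ℝ ∙ θ)ᗮ,
      ∫ τ : ℝ, windowedRay h f (u + τ • (r • θ)) (r • θ) * Complex.exp (-(Complex.I * σ * τ))
        = (r⁻¹ : ℂ) * ft1 (fun s => f (u + s • θ)) (σ / r) * ft1 h (-σ) := by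
    intro u
    calc ∫ τ : ℝ, windowedRay h f (u + τ • (r • θ)) (r • θ) * Complex.exp (-(Complex.I * σ * τ))
        = ft1 (fun τ => ∫ t, f (u + t • (r • θ)) * h (t - τ)) σ := by
          simp only [windowedRay_add_smul, ft1, mul_right_comm Complex.I]
      _ = ft1 (fun t => f (u + t • (r • θ))) σ * ft1 h (-σ) :=
          ft1_correlation (f.integrable_comp_add_smul _ hrθ) h.integrable σ
      _ = (r⁻¹ : ℂ) * ft1 (fun s => f (u + s • θ)) (σ / r) * ft1 h (-σ) := by
          simp only [smul_smul, mul_comm _ r]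
          rw [ft1_comp_mul_left (fun s => f (u + s • θ)) hr.ne', abs_of_pos hr, Complex.real_smul]
          push_cast
          ring
  simp only [hline, integral_mul_const, integral_const_mul,
    ← ftn_smul_eq_integral_orthogonal_ft1 f.integrable hθ]
  field_simp [ofReal_ne_zero.mpr hr.ne']
end
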